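/- arXiv:2509.21283 — 2 statements merged into one kernel-verified Lean document; each statement's English description precedes it below -/
import Mathlib

section
/- Let $W \in M^{n\times n}$ be symmetric and $Y \in \mathbb{R}^n$ with $WY = 0$. Let $Z \in M^{n\times n}$ be such that $WZ$ is antisymmetric, $Z^\dagger y = 0$ for all $y$ in $D^\perp_{WY} := \{y : Wy = 0, Y\cdot y = 0\}$, and $Z^\dagger Y \in \mathrm{range}\,W$. Let $\omega \in \mathbb{R}^n$ satisfy $Y\cdot\omega = 0$, $y\cdot\omega = 0$ for all $y \in D^\perp_{WY}$, and $W\omega = -Z^\dagger Y$. Then for all $y \in \mathbb{R}^n$: $(Y^\dagger + y^\dagger W)(Zy + \omega) = 0$, i.e. the quadratic function $\zeta(y) = Y\cdot y + \tfrac12 y\cdot Wy$ satisfies $\nabla\zeta(y)\cdot(Zy+\omega) = 0$ for all $y$. -/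
open Matrix

/-- core of Theorem 2.5: the quadratic `ζ(y) = Y·y + ½ y·Wy` satisfies
`∇ζ(y)·(Zy + ω) = 0` for all `y`, i.e. `(Yᵀ + yᵀW)(Zy + ω) = 0`. -/
theorem stmt_4 {n : ℕ} (W Z : Matrix (Fin n) (Fin n) ℝ) (Y ω : Fin n → ℝ)
    (hW : W.IsSymm) (hWY : W.mulVec Y = 0)
    (hWZ : (W * Z)ᵀ = -(W * Z))
    (hZperp : ∀ y : Fin n → ℝ, W.mulVec y = 0 → Y ⬝ᵥ y = 0 → Zᵀ.mulVec y = 0)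
    (hZY : ∃ v : Fin n → ℝ, W.mulVec v = Zᵀ.mulVec Y)
    (hYω : Y ⬝ᵥ ω = 0)
    (hωperp : ∀ y : Fin n → ℝ, W.mulVec y = 0 → Y ⬝ᵥ y = 0 → y ⬝ᵥ ω = 0)
    (hWω : W.mulVec ω = -(Zᵀ.mulVec Y)) :
    ∀ y : Fin n → ℝ, (Y + W.mulVec y) ⬝ᵥ (Z.mulVec y + ω) = 0 := by
  intro y
  have hsym : ∀ a b : Fin n → ℝ, W.mulVec a ⬝ᵥ b = a ⬝ᵥ W.mulVec b := by
    intro a b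
    rw [dotProduct_comm, dotProduct_mulVec, ← mulVec_transpose, hW.eq, dotProduct_comm]
  have h1 : Y ⬝ᵥ Z.mulVec y = -(W.mulVec y ⬝ᵥ ω) := by
    rw [dotProduct_mulVec, ← mulVec_transpose, show Zᵀ.mulVec Y = -(W.mulVec ω) by
      rw [hWω, neg_neg], neg_dotProduct, hsym, dotProduct_comm]
  have h2 : W.mulVec y ⬝ᵥ Z.mulVec y = 0 := by
    have h : W.mulVec y ⬝ᵥ Z.mulVec y = y ⬝ᵥ (W * Z).mulVec y := by
      rw [← mulVec_mulVec, hsym]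
    have h3 : y ⬝ᵥ (W * Z).mulVec y = -(y ⬝ᵥ (W * Z).mulVec y) := by
      conv_lhs => rw [dotProduct_mulVec, ← mulVec_transpose, hWZ, neg_mulVec,
        neg_dotProduct, dotProduct_comm]
    linarith [h, h3]
  rw [dotProduct_add, add_dotProduct, add_dotProduct, h1, h2, hYω]
  ring
end

section
/- For the isentropic Euler potential with $n \geq 2$: let $\zeta(z) = z_1 + \tfrac12\sum_{j=2}^n z_j^2$ on $\mathbb{R}^n$. Characterize the set of pairs $(Z, \omega) \in M^{n\times n}\times\mathbb{R}^n$ such that $\nabla\zeta(z)\cdot(Zz+\omega) = 0$ for all $z \in \mathbb{R}^n$: prove that $(Z,\omega)$ satisfies this identity if and only if, writing $z = (z_1, u)$ with $u \in \mathbb{R}^{n-1}$, $Z$ has the block form $Z = \begin{pmatrix} 0 & b^\dagger \\ 0 & R \end{pmatrix}$ with $R \in M^{(n-1)\times(n-1)}$ antisymmetric, $b \in \mathbb{R}^{n-1}$, and $\omega = (\omega_1, w)$ with $\omega_1 = 0$ and $w = -b$. -/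
open Matrix

/-- characterization of the symmetries of the isentropic Euler potential
`ζ(z) = z₁ + ½ ∑_{j≥2} z_j²` (here coordinate `0` plays the role of `z₁`):
`∇ζ(z)·(Zz+ω) = 0` for all `z` iff the first column of `Z` vanishes, the lower-right
block of `Z` is antisymmetric, `ω₁ = 0`, and `ω_j = -Z_{1j}` for `j ≥ 2`. -/
theorem stmt_10 (n : ℕ) (Z : Matrix (Fin (n + 2)) (Fin (n + 2)) ℝ)
    (ω : Fin (n + 2) → ℝ) :
    (∀ z : Fin (n + 2) → ℝ,
        ∑ i, (if i = 0 then 1 else z i) * (Z.mulVec z + ω) i = 0)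
      ↔
    ((∀ i, Z i 0 = 0) ∧
     (∀ i j, i ≠ 0 → j ≠ 0 → Z j i = -(Z i j)) ∧
     ω 0 = 0 ∧
     (∀ j, j ≠ 0 → ω j = -(Z 0 j))) := by
  constructor
  · intro h
    -- evaluation lemma
    have heval : ∀ (a b : Fin (n + 2)) (t u : ℝ),
        Z 0 a * t + Z 0 b * u + ω 0 +
          (((if a ≠ 0 then t * (Z a a * t) else 0) +
              if b ≠ 0 then u * (Z b a * t) else 0) +
            ((if a ≠ 0 then t * (Z a b * u) else 0) +
              if b ≠ 0 then u * (Z b b * u) else 0) +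
            ((if a ≠ 0 then t * ω a else 0) + if b ≠ 0 then u * ω b else 0)) = 0 := by
      intro a b t u
      have h1 := h (fun k => (if k = a then t else 0) + (if k = b then u else 0))
      rw [← Finset.add_sum_erase _ _ (Finset.mem_univ 0)] at h1
      rw [Finset.sum_congr rfl (fun i hi => by
        rw [if_neg (Finset.mem_erase.mp hi).1])] at h1
      simp only [if_pos rfl, Pi.add_apply, Matrix.mulVec, dotProduct,
        mul_add, mul_ite, mul_zero, Finset.sum_add_distrib, Finset.sum_ite_eq',
        Finset.mem_univ, if_true, add_mul, ite_mul, zero_mul,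
        Finset.mem_erase, and_true, one_mul] at h1
      exact h1
    have hω0 : ω 0 = 0 := by simpa using h 0
    have hdiag : ∀ a : Fin (n + 2), a ≠ 0 → Z a a = 0 := by
      intro a ha
      have h1 := heval a a 1 0
      have h2 := heval a a (-1) 0
      simp only [if_pos ha, hω0] at h1 h2
      linarith [h1, h2]
    have hωj : ∀ a : Fin (n + 2), a ≠ 0 → ω a = -(Z 0 a) := by
      intro a ha
      have h1 := heval a a 1 0
      have h2 := heval a a (-1) 0
      simp only [if_pos ha, hω0] at h1 h2
      linarith [h1, h2]
    have hZ00 : Z 0 0 = 0 := by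
      have h1 := heval 0 0 1 0
      simp only [if_neg (not_not.mpr (rfl : (0 : Fin (n+2)) = 0)), hω0] at h1
      linarith
    have hcol : ∀ i, Z i 0 = 0 := by
      intro i
      by_cases hi : i = 0
      · rw [hi]; exact hZ00
      · have h1 := heval 0 i 1 1
        simp only [if_pos hi, if_neg (not_not.mpr (rfl : (0 : Fin (n+2)) = 0)), hω0,
          hZ00, hdiag i hi] at h1
        have := hωj i hi
        linarith [h1]
    refine ⟨hcol, ?_, hω0, hωj⟩
    intro i j hi hj
    by_cases hij : i = j
    · rw [hij, hdiag j hj]; ring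
    · have h1 := heval i j 1 1
      simp only [if_pos hi, if_pos hj, hω0, hdiag i hi, hdiag j hj] at h1
      have e1 := hωj i hi
      have e2 := hωj j hj
      linarith [h1]
  · rintro ⟨hcol, hanti, hω0, hω⟩ z
    rw [← Finset.add_sum_erase _ _ (Finset.mem_univ 0), if_pos rfl, one_mul]
    rw [Finset.sum_congr rfl (fun i hi => by
      rw [if_neg (Finset.mem_erase.mp hi).1])]
    set s := (Finset.univ : Finset (Fin (n + 2))).erase 0 with hs
    have hmv : ∀ i, (Z.mulVec z) i = ∑ j ∈ s, Z i j * z j := by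
      intro i
      show ∑ j, Z i j * z j = ∑ j ∈ s, Z i j * z j
      rw [← Finset.add_sum_erase _ _ (Finset.mem_univ 0), hcol i, zero_mul, zero_add]
    have hT : (∑ i ∈ s, ∑ j ∈ s, z i * (Z i j * z j)) = 0 := by
      have h2 : (∑ i ∈ s, ∑ j ∈ s, z i * (Z i j * z j))
          = -∑ i ∈ s, ∑ j ∈ s, z i * (Z i j * z j) := by
        calc (∑ i ∈ s, ∑ j ∈ s, z i * (Z i j * z j))
            = ∑ j ∈ s, ∑ i ∈ s, z i * (Z i j * z j) := Finset.sum_comm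
          _ = ∑ j ∈ s, ∑ i ∈ s, -(z j * (Z j i * z i)) := by
              refine Finset.sum_congr rfl fun j hj => Finset.sum_congr rfl fun i hi => ?_
              rw [hanti j i (Finset.mem_erase.mp hj).1 (Finset.mem_erase.mp hi).1]
              ring
          _ = -∑ j ∈ s, ∑ i ∈ s, z j * (Z j i * z i) := by
              simp [Finset.sum_neg_distrib]
      linarith
    have hωs : ∀ i ∈ s, z i * ω i = -(Z 0 i * z i) := by
      intro i hi
      rw [hω i (Finset.mem_erase.mp hi).1]; ring
    simp only [Pi.add_apply, hmv, hω0, add_zero, mul_add, Finset.sum_add_distrib,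
      Finset.mul_sum]
    rw [Finset.sum_congr rfl hωs]
    rw [Finset.sum_neg_distrib]
    have : (∑ i ∈ s, ∑ j ∈ s, z i * (Z i j * z j)) = 0 := hT
    linarith [hT]
end
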